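/- arXiv:1602.04661 — 5 statements merged into one kernel-verified Lean document; each statement's English description precedes it below -/
import Mathlib

section
/- Every codeword of the 3rd order Reed-Muller code R(3,7) has Hamming weight divisible by 4; that is, R(3,7) is a doubly-even code. -/
noncomputable section

/-- Evaluation of multivariate polynomials over GF(2) as a linear map. -/
def evalLM (m : ℕ) :
    MvPolynomial (Fin m) (ZMod 2) →ₗ[ZMod 2] ((Fin m → ZMod 2) → ZMod 2) where
  toFun p := fun v => MvPolynomial.eval v p
  map_add' p q := by funext v; simp
  map_smul' c p := by funext v; simp [MvPolynomial.smul_eval]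

/-- The Reed-Muller code R(r,m): evaluation vectors of polynomials of total degree ≤ r. -/
def ReedMuller (r m : ℕ) : Submodule (ZMod 2) ((Fin m → ZMod 2) → ZMod 2) :=
  (MvPolynomial.restrictTotalDegree (Fin m) (ZMod 2) r).map (evalLM m)

/-- The dual code with respect to the standard dot product. -/
def dualCode {ι : Type*} [Fintype ι] (C : Submodule (ZMod 2) (ι → ZMod 2)) :
    Submodule (ZMod 2) (ι → ZMod 2) where
  carrier := {x | ∀ c ∈ C, dotProduct x c = 0}
  add_mem' := by
    intro a b ha hb c hc
    simp only [Set.mem_setOf_eq] at *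
    rw [add_dotProduct, ha c hc, hb c hc, add_zero]
  zero_mem' := by
    intro c hc
    simp [zero_dotProduct]
  smul_mem' := by
    intro a x hx c hc
    simp only [Set.mem_setOf_eq] at *
    rw [smul_dotProduct, hx c hc, smul_zero]

/-- The weight distribution: A_i = number of codewords of Hamming weight i. -/
def wtDist {ι : Type*} [Fintype ι] (C : Submodule (ZMod 2) (ι → ZMod 2)) (i : ℕ) : ℕ :=
  Set.ncard {c : ι → ZMod 2 | c ∈ C ∧ hammingNorm c = i}

/-- The code C has minimum distance d. -/
def IsMinDist {ι : Type*} [Fintype ι] (C : Submodule (ZMod 2) (ι → ZMod 2)) (d : ℕ) : Prop :=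
  (∃ c ∈ C, c ≠ 0 ∧ hammingNorm c = d) ∧ ∀ c ∈ C, c ≠ 0 → d ≤ hammingNorm c

/-- Vectors orthogonal to a fixed vector x. -/
def perpVec {ι : Type*} [Fintype ι] (x : ι → ZMod 2) : Submodule (ZMod 2) (ι → ZMod 2) where
  carrier := {c | dotProduct x c = 0}
  add_mem' := by
    intro a b ha hb
    simp only [Set.mem_setOf_eq] at *
    rw [dotProduct_add, ha, hb, add_zero]
  zero_mem' := by simp [dotProduct_zero]
  smul_mem' := by
    intro a c hc
    simp only [Set.mem_setOf_eq] at *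
    rw [dotProduct_smul, hc, smul_zero]

/-- The automorphism group of a code: coordinate permutations preserving the code. -/
def codeAut {ι : Type*} [Fintype ι] (C : Submodule (ZMod 2) (ι → ZMod 2)) :
    Subgroup (Equiv.Perm ι) where
  carrier := {σ | ∀ c : ι → ZMod 2, c ∈ C ↔ c ∘ σ ∈ C}
  one_mem' := by intro c; rfl
  mul_mem' := by
    intro σ τ hσ hτ c
    exact (hσ c).trans (hτ (c ∘ σ))
  inv_mem' := by
    intro σ hσ c
    have h := hσ (c ∘ ⇑(σ⁻¹))
    have e : (c ∘ ⇑(σ⁻¹)) ∘ ⇑σ = c := by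
      funext v; simp
    rw [e] at h
    exact h.symm

/-!
R(r,m) is spanned by the monomial vectors x_S (|S| ≤ r), and x_S has weight 2^(m-|S|), which is
divisible by 4 when |S| ≤ m - 2. Since x_S x_T = x_{S ∪ T} has even weight when |S| + |T| < m,
the spanning set is self-orthogonal. Over GF(2), wt(a + b) = wt a + wt b - 2 wt(a b), so a sum of
two orthogonal vectors of weight divisible by 4 again has weight divisible by 4, and this
propagates from a self-orthogonal, doubly-even spanning set to the whole span.
-/

open MvPolynomial Finset Submodule

section DoublyEven

variable {ι : Type*} [Fintype ι]

lemma hammingNorm_eq_sum_val (x : ι → ZMod 2) : hammingNorm x = ∑ i, (x i).val := by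
  rw [hammingNorm, card_filter]
  refine sum_congr rfl fun i _ => ?_
  generalize x i = a
  revert a
  decide

lemma hammingNorm_add_add_two_mul (a b : ι → ZMod 2) :
    hammingNorm (a + b) + 2 * hammingNorm (a * b) = hammingNorm a + hammingNorm b := by
  simp only [hammingNorm_eq_sum_val, mul_sum, ← sum_add_distrib]
  refine sum_congr rfl fun i _ => ?_
  simp only [Pi.add_apply, Pi.mul_apply]
  generalize a i = x
  generalize b i = y
  revert x y
  decide

lemma natCast_hammingNorm (x : ι → ZMod 2) : (hammingNorm x : ZMod 2) = ∑ i, x i := by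
  simp [hammingNorm_eq_sum_val]

lemma dotProduct_eq_natCast_hammingNorm_mul (x y : ι → ZMod 2) :
    x ⬝ᵥ y = (hammingNorm (x * y) : ZMod 2) :=
  (natCast_hammingNorm _).symm

lemma four_dvd_hammingNorm_add {a b : ι → ZMod 2} (ha : 4 ∣ hammingNorm a)
    (hb : 4 ∣ hammingNorm b) (hab : a ⬝ᵥ b = 0) : 4 ∣ hammingNorm (a + b) := by
  have h2 : 2 ∣ hammingNorm (a * b) := by
    rwa [← ZMod.natCast_eq_zero_iff, ← dotProduct_eq_natCast_hammingNorm_mul]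
  have := hammingNorm_add_add_two_mul a b
  omega

lemma span_le_dualCode_span {s : Set (ι → ZMod 2)} (hs : ∀ x ∈ s, ∀ y ∈ s, x ⬝ᵥ y = 0) :
    span (ZMod 2) s ≤ dualCode (span (ZMod 2) s) := by
  have hperp : ∀ x ∈ s, span (ZMod 2) s ≤ perpVec x := fun x hx =>
    span_le.2 fun y hy => hs x hx y hy
  exact span_le.2 fun x hx c hc => hperp x hx hc

theorem four_dvd_hammingNorm_of_mem_span {s : Set (ι → ZMod 2)}
    (h4 : ∀ x ∈ s, 4 ∣ hammingNorm x) (hs : ∀ x ∈ s, ∀ y ∈ s, x ⬝ᵥ y = 0)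
    {c : ι → ZMod 2} (hc : c ∈ span (ZMod 2) s) : 4 ∣ hammingNorm c := by
  induction hc using span_induction with
  | mem x hx => exact h4 x hx
  | zero => simp
  | add x y hx hy px py =>
    exact four_dvd_hammingNorm_add px py (span_le_dualCode_span hs hx y hy)
  | smul a x _ px =>
    obtain rfl | rfl : a = 0 ∨ a = 1 := by revert a; decide
    · simp
    · rwa [one_smul]

end DoublyEven

section MonomialVec

variable {σ : Type*}

def monomialVec (d : σ →₀ ℕ) : (σ → ZMod 2) → ZMod 2 := fun v => eval v (monomial d 1)

lemma monomialVec_mul (d e : σ →₀ ℕ) : monomialVec d * monomialVec e = monomialVec (d + e) := by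
  funext v
  rw [Pi.mul_apply, monomialVec, monomialVec, monomialVec, ← map_mul, monomial_mul, one_mul]

lemma monomialVec_ne_zero_iff {d : σ →₀ ℕ} {v : σ → ZMod 2} :
    monomialVec d v ≠ 0 ↔ ∀ i ∈ d.support, v i = 1 := by
  have hunit : ∀ a : ZMod 2, a ≠ 0 ↔ a = 1 := by decide
  simp only [monomialVec, eval_monomial, one_mul, Finsupp.prod, prod_ne_zero_iff]
  refine forall₂_congr fun i hi => ?_
  rw [pow_ne_zero_iff (Finsupp.mem_support_iff.1 hi), hunit]

lemma hammingNorm_monomialVec [Fintype σ] [DecidableEq σ] (d : σ →₀ ℕ) :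
    hammingNorm (monomialVec d) = 2 ^ (Fintype.card σ - #d.support) := by
  have hsupp : ({v | monomialVec d v ≠ 0} : Finset (σ → ZMod 2)) =
      Fintype.piFinset fun i => if i ∈ d.support then {1} else univ := by
    ext v
    simp only [mem_filter, mem_univ, true_and, monomialVec_ne_zero_iff, Fintype.mem_piFinset]
    refine forall_congr' fun i => ?_
    split_ifs with hi <;> simp [hi]
  rw [hammingNorm, hsupp, Fintype.card_piFinset]
  simp only [apply_ite card, card_singleton, card_univ, ZMod.card]
  rw [prod_ite, prod_const_one, one_mul, prod_const, filter_notMem_eq_sdiff, card_univ_sdiff]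

lemma card_support_le_degree (d : σ →₀ ℕ) : #d.support ≤ d.degree := by
  simpa [Finsupp.degree_apply] using card_nsmul_le_sum d.support d 1 fun i hi =>
    Nat.one_le_iff_ne_zero.2 (Finsupp.mem_support_iff.1 hi)

end MonomialVec

lemma reedMuller_eq_span (r m : ℕ) :
    ReedMuller r m = span (ZMod 2) (monomialVec '' {d : Fin m →₀ ℕ | d.degree ≤ r}) := by
  rw [ReedMuller, restrictTotalDegree, restrictSupport_eq_span, map_span, Set.image_image]
  rfl

theorem reedMuller_four_dvd_hammingNorm {r m : ℕ} (hr : 2 * r < m) (hm : r + 2 ≤ m) :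
    ∀ c ∈ ReedMuller r m, 4 ∣ hammingNorm c := by
  intro c hc
  rw [reedMuller_eq_span] at hc
  refine four_dvd_hammingNorm_of_mem_span ?_ ?_ hc
  · rintro _ ⟨d, hd : d.degree ≤ r, rfl⟩
    rw [hammingNorm_monomialVec, Fintype.card_fin]
    have := card_support_le_degree d
    exact pow_dvd_pow 2 (by omega : 2 ≤ m - #d.support)
  · rintro _ ⟨d, hd : d.degree ≤ r, rfl⟩ _ ⟨e, he : e.degree ≤ r, rfl⟩
    have hde : #(d + e).support < m := by
      have := card_support_le_degree (d + e)
      rw [map_add] at this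
      omega
    rw [dotProduct_eq_natCast_hammingNorm_mul, monomialVec_mul, hammingNorm_monomialVec,
      Fintype.card_fin, Nat.cast_pow, ZMod.natCast_self, zero_pow (by omega)]

/-- Every codeword of R(3,7) has Hamming weight divisible by 4. -/
theorem reedMuller_3_7_doubly_even :
    ∀ c ∈ ReedMuller 3 7, hammingNorm c % 4 = 0 := fun c hc =>
  Nat.mod_eq_zero_of_dvd (reedMuller_four_dvd_hammingNorm (by norm_num) (by norm_num) c hc)

end
end

section
/- Let C be a self-dual binary code of even length n with minimum distance d, and suppose x ∈ GF(2)^n has even Hamming weight and satisfies x·c = 1 for every codeword c ∈ C of weight d. Set C_0 = {c ∈ C : x·c = 0}. Then C_0 is a subcode of C of dimension n/2 − 1 (index 2 in C), and for any y ∈ C \ C_0, both D_1 = C_0 + ⟨x⟩ and D_2 = C_0 + ⟨x + y⟩ are self-dual binary codes of length n that are neighbors of C, and neither D_1 nor D_2 contains any codeword of C of weight d. -/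
noncomputable section

/-!
Since `C` is self-dual, `x ∉ C`: otherwise `x` would be orthogonal to a minimum-weight codeword.
Hence `c ↦ x · c` is a nonzero functional on `C`, and its kernel `C₀` has codimension one.
Both `x` and `x + y` are self-orthogonal (over `GF(2)`, `v · v` is the parity of the weight of
`v`), orthogonal to `C₀` and outside `C`, so adjoining either to `C₀` gives a self-orthogonal code
of dimension `n / 2`, i.e. a self-dual code, meeting `C` exactly in `C₀`. A minimum-weight codeword
`c` has `x · c = 1`, so `c ∉ C₀` and therefore `c` lies in neither neighbor.
-/

open Module Submodule

section Field

variable {K V : Type*} [Field K] [AddCommGroup V] [Module K V]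

theorem finrank_inf_ker_add_one [FiniteDimensional K V] {C : Submodule K V} {f : Dual K V}
    (hf : ∃ c ∈ C, f c ≠ 0) : finrank K ↥(C ⊓ LinearMap.ker f) + 1 = finrank K C := by
  obtain ⟨c, hc, hfc⟩ := hf
  have hne : f.domRestrict C ≠ 0 := fun h => hfc (by simpa using LinearMap.congr_fun h ⟨c, hc⟩)
  rw [← Dual.finrank_ker_add_one_of_ne_zero hne, LinearMap.ker_domRestrict,
    ← map_comap_subtype, finrank_map_subtype_eq]

theorem inf_sup_span_singleton_eq {C C₀ : Submodule K V} (hle : C₀ ≤ C) {w : V} (hw : w ∉ C) :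
    C ⊓ (C₀ ⊔ span K {w}) = C₀ := by
  rw [inf_comm, sup_inf_assoc_of_le _ hle, inf_comm,
    (disjoint_span_singleton_of_notMem hw).eq_bot, sup_bot_eq]

end Field

section BinaryCode

variable {ι : Type*} [Fintype ι]

theorem dualCode_anti {A B : Submodule (ZMod 2) (ι → ZMod 2)} (h : A ≤ B) :
    dualCode B ≤ dualCode A :=
  fun _ hx c hc => hx c (h hc)

theorem dualCode_eq_dualCoannihilator [DecidableEq ι] (C : Submodule (ZMod 2) (ι → ZMod 2)) :
    dualCode C = (C.map (dotProductEquiv (ZMod 2) ι).toLinearMap).dualCoannihilator := by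
  ext x
  simp only [mem_dualCoannihilator, mem_map, forall_exists_index, and_imp,
    forall_apply_eq_imp_iff₂]
  simp [dualCode, dotProduct_comm x]

theorem finrank_add_finrank_dualCode (C : Submodule (ZMod 2) (ι → ZMod 2)) :
    finrank (ZMod 2) C + finrank (ZMod 2) (dualCode C) = Fintype.card ι := by
  classical
  rw [dualCode_eq_dualCoannihilator, ← LinearEquiv.finrank_map_eq (dotProductEquiv (ZMod 2) ι) C,
    Subspace.finrank_add_finrank_dualCoannihilator_eq, finrank_fintype_fun_eq_card]

theorem two_mul_finrank_of_dualCode_eq {C : Submodule (ZMod 2) (ι → ZMod 2)}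
    (hC : dualCode C = C) : 2 * finrank (ZMod 2) C = Fintype.card ι := by
  have h := finrank_add_finrank_dualCode C
  rw [hC] at h
  omega

theorem dualCode_eq_of_le_dualCode {C : Submodule (ZMod 2) (ι → ZMod 2)}
    (hle : C ≤ dualCode C) (hdim : 2 * finrank (ZMod 2) C = Fintype.card ι) :
    dualCode C = C := by
  have h := finrank_add_finrank_dualCode C
  exact (eq_of_le_of_finrank_le hle (by omega)).symm

theorem dotProduct_self_eq_hammingNorm (x : ι → ZMod 2) : x ⬝ᵥ x = (hammingNorm x : ZMod 2) := by
  have hsq : ∀ a : ZMod 2, a * a = if a ≠ 0 then 1 else 0 := by decide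
  simp only [dotProduct, hsq, Finset.sum_boole, hammingNorm]

theorem dotProduct_self_eq_zero_of_even {x : ι → ZMod 2} (h : Even (hammingNorm x)) :
    x ⬝ᵥ x = 0 := by
  rw [dotProduct_self_eq_hammingNorm, ZMod.natCast_eq_zero_iff]
  exact h.two_dvd

theorem dotProduct_self_add (x y : ι → ZMod 2) : (x + y) ⬝ᵥ (x + y) = x ⬝ᵥ x + y ⬝ᵥ y := by
  rw [add_dotProduct, dotProduct_add, dotProduct_add, dotProduct_comm y x, add_assoc,
    ← add_assoc (x ⬝ᵥ y), CharTwo.add_self_eq_zero, zero_add]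

theorem sup_span_singleton_le_dualCode {C : Submodule (ZMod 2) (ι → ZMod 2)}
    (hC : C ≤ dualCode C) {w : ι → ZMod 2} (hw : w ⬝ᵥ w = 0) (hwC : w ∈ dualCode C) :
    C ⊔ span (ZMod 2) {w} ≤ dualCode (C ⊔ span (ZMod 2) {w}) := by
  have hCw : ∀ c ∈ C, c ⬝ᵥ w = 0 := fun c hc => by rw [dotProduct_comm]; exact hwC c hc
  rintro a ha b hb
  obtain ⟨c, hc, _, hs, rfl⟩ := mem_sup.1 ha
  obtain ⟨s, rfl⟩ := mem_span_singleton.1 hs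
  obtain ⟨c', hc', _, ht, rfl⟩ := mem_sup.1 hb
  obtain ⟨t, rfl⟩ := mem_span_singleton.1 ht
  simp [add_dotProduct, dotProduct_add, hC hc c' hc', hwC c' hc', hCw c hc, hw]

theorem dualCode_sup_span_singleton_eq {C C₀ : Submodule (ZMod 2) (ι → ZMod 2)}
    (hC : dualCode C = C) (hle : C₀ ≤ C) (hdim : finrank (ZMod 2) C₀ + 1 = finrank (ZMod 2) C)
    {w : ι → ZMod 2} (hw : w ⬝ᵥ w = 0) (hwC₀ : w ∈ dualCode C₀) (hwC : w ∉ C) :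
    dualCode (C₀ ⊔ span (ZMod 2) {w}) = C₀ ⊔ span (ZMod 2) {w} := by
  have hC₀ : C₀ ≤ dualCode C₀ := hle.trans (hC.ge.trans (dualCode_anti hle))
  refine dualCode_eq_of_le_dualCode (sup_span_singleton_le_dualCode hC₀ hw hwC₀) ?_
  rw [finrank_sup_span_singleton fun h => hwC (hle h), hdim, two_mul_finrank_of_dualCode_eq hC]

theorem finrank_inf_perpVec_add_one [DecidableEq ι] {C : Submodule (ZMod 2) (ι → ZMod 2)}
    {x : ι → ZMod 2} (hx : x ∉ dualCode C) :
    finrank (ZMod 2) ↥(C ⊓ perpVec x) + 1 = finrank (ZMod 2) C := by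
  have hker : perpVec x = LinearMap.ker (dotProductEquiv (ZMod 2) ι x) := by ext; simp [perpVec]
  rw [hker]
  refine finrank_inf_ker_add_one ?_
  by_contra! h
  exact hx fun c hc => by simpa using h c hc

end BinaryCode

theorem neighbor_construction_general
    (n : ℕ)
    (C : Submodule (ZMod 2) (Fin n → ZMod 2)) (hC : dualCode C = C)
    (d : ℕ) (hd : IsMinDist C d)
    (x : Fin n → ZMod 2) (hxeven : Even (hammingNorm x))
    (hx : ∀ c ∈ C, hammingNorm c = d → dotProduct x c = 1)
    (C0 : Submodule (ZMod 2) (Fin n → ZMod 2)) (hC0 : C0 = C ⊓ perpVec x) :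
    Module.finrank (ZMod 2) ↥C0 = n / 2 - 1 ∧
    ∀ y, y ∈ C → y ∉ C0 →
      ∀ D1 D2 : Submodule (ZMod 2) (Fin n → ZMod 2),
        D1 = C0 ⊔ Submodule.span (ZMod 2) {x} →
        D2 = C0 ⊔ Submodule.span (ZMod 2) {x + y} →
        dualCode D1 = D1 ∧ dualCode D2 = D2 ∧
        Module.finrank (ZMod 2) ↥(C ⊓ D1) = n / 2 - 1 ∧
        Module.finrank (ZMod 2) ↥(C ⊓ D2) = n / 2 - 1 ∧
        ∀ c ∈ C, hammingNorm c = d → c ∉ D1 ∧ c ∉ D2 := by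
  obtain ⟨⟨c₀, hc₀C, -, hc₀d⟩, -⟩ := hd
  have hx_dual : x ∉ dualCode C := fun h => by simpa [hx c₀ hc₀C hc₀d] using h c₀ hc₀C
  have hxC : x ∉ C := hC ▸ hx_dual
  have hdimC : 2 * finrank (ZMod 2) C = n := by
    simpa using two_mul_finrank_of_dualCode_eq hC
  have hdimC0 : finrank (ZMod 2) C0 + 1 = finrank (ZMod 2) C :=
    hC0 ▸ finrank_inf_perpVec_add_one hx_dual
  have hle : C0 ≤ C := hC0 ▸ inf_le_left
  have hxC0 : x ∈ dualCode C0 := fun c hc => (hC0 ▸ hc : c ∈ C ⊓ perpVec x).2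
  have hmin : ∀ c ∈ C, hammingNorm c = d → c ∉ C0 := fun c hc hcd h => by
    subst hC0; exact one_ne_zero ((hx c hc hcd).symm.trans h.2)
  have hneighbor : ∀ w, w ⬝ᵥ w = 0 → w ∈ dualCode C0 → w ∉ C →
      dualCode (C0 ⊔ span (ZMod 2) {w}) = C0 ⊔ span (ZMod 2) {w} ∧
      finrank (ZMod 2) ↥(C ⊓ (C0 ⊔ span (ZMod 2) {w})) = n / 2 - 1 ∧
      ∀ c ∈ C, hammingNorm c = d → c ∉ C0 ⊔ span (ZMod 2) {w} := fun w hw hwC0 hwC => by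
    have hint := inf_sup_span_singleton_eq hle hwC
    exact ⟨dualCode_sup_span_singleton_eq hC hle hdimC0 hw hwC0 hwC, by rw [hint]; omega,
      fun c hcC hcd hcD => hmin c hcC hcd (hint ▸ ⟨hcC, hcD⟩)⟩
  refine ⟨by omega, fun y hyC _ D1 D2 hD1 hD2 => ?_⟩
  subst hD1 hD2
  have hy_dual : y ∈ dualCode C := hC.symm ▸ hyC
  have hxx := dotProduct_self_eq_zero_of_even hxeven
  have hxyxy : (x + y) ⬝ᵥ (x + y) = 0 := by
    rw [dotProduct_self_add, hxx, hy_dual y hyC, add_zero]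
  have hxyC : x + y ∉ C := fun h => hxC (by simpa using C.sub_mem h hyC)
  obtain ⟨hD1, hdimD1, hminD1⟩ := hneighbor x hxx hxC0 hxC
  obtain ⟨hD2, hdimD2, hminD2⟩ :=
    hneighbor (x + y) hxyxy (add_mem hxC0 (dualCode_anti hle hy_dual)) hxyC
  exact ⟨hD1, hD2, hdimD1, hdimD2, fun c hc hcd => ⟨hminD1 c hc hcd, hminD2 c hc hcd⟩⟩

/-- A vector x of even weight with x·c = 1 for all minimum-weight codewords
of a self-dual code C yields, via the index-2 subcode C₀ = {c ∈ C : x·c = 0}, two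
self-dual neighbors of C avoiding all minimum-weight codewords of C. -/
theorem neighbor_construction
    (n : ℕ) (hn : Even n)
    (C : Submodule (ZMod 2) (Fin n → ZMod 2)) (hC : dualCode C = C)
    (d : ℕ) (hd : IsMinDist C d)
    (x : Fin n → ZMod 2) (hxeven : Even (hammingNorm x))
    (hx : ∀ c ∈ C, hammingNorm c = d → dotProduct x c = 1)
    (C0 : Submodule (ZMod 2) (Fin n → ZMod 2)) (hC0 : C0 = C ⊓ perpVec x) :
    Module.finrank (ZMod 2) ↥C0 = n / 2 - 1 ∧
    ∀ y, y ∈ C → y ∉ C0 →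
      ∀ D1 D2 : Submodule (ZMod 2) (Fin n → ZMod 2),
        D1 = C0 ⊔ Submodule.span (ZMod 2) {x} →
        D2 = C0 ⊔ Submodule.span (ZMod 2) {x + y} →
        dualCode D1 = D1 ∧ dualCode D2 = D2 ∧
        Module.finrank (ZMod 2) ↥(C ⊓ D1) = n / 2 - 1 ∧
        Module.finrank (ZMod 2) ↥(C ⊓ D2) = n / 2 - 1 ∧
        ∀ c ∈ C, hammingNorm c = d → c ∉ D1 ∧ c ∉ D2 :=
  neighbor_construction_general n C hC d hd x hxeven hx C0 hC0

end
end

section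
/- There is no vector x ∈ GF(2)^128 such that x·c = 1 for every codeword c of Hamming weight 16 in the 3rd order Reed-Muller code R(3,7). -/
noncomputable section

/-!
The codewords x₀x₁x₂ and x₀x₁x₃ of R(3,7) and their sum x₀x₁(x₂ + x₃) all have weight 16,
so a vector with dot product 1 against all three would give 1 + 1 = 1 in GF(2).
-/

open MvPolynomial

theorem prod_coord_mem_reedMuller {r m : ℕ} (s : Finset (Fin m)) (hs : s.card ≤ r) :
    (fun v : Fin m → ZMod 2 => ∏ i ∈ s, v i) ∈ ReedMuller r m := by
  refine ⟨∏ i ∈ s, X i, ?_, ?_⟩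
  · rw [SetLike.mem_coe, mem_restrictTotalDegree]
    refine (totalDegree_finsetProd _ _).trans ?_
    simpa [totalDegree_X] using hs
  · funext v
    simp [evalLM]

theorem not_exists_forall_dotProduct_eq_one_of_add_mem {ι : Type*} [Fintype ι]
    {C : Submodule (ZMod 2) (ι → ZMod 2)} {w : ℕ} {c₁ c₂ : ι → ZMod 2}
    (h₁ : c₁ ∈ C) (h₂ : c₂ ∈ C) (hw₁ : hammingNorm c₁ = w) (hw₂ : hammingNorm c₂ = w)
    (hw : hammingNorm (c₁ + c₂) = w) :
    ¬ ∃ x : ι → ZMod 2, ∀ c ∈ C, hammingNorm c = w → x ⬝ᵥ c = 1 := by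
  rintro ⟨x, hx⟩
  have h := hx _ (C.add_mem h₁ h₂) hw
  rw [dotProduct_add, hx c₁ h₁ hw₁, hx c₂ h₂ hw₂] at h
  exact absurd h (by decide)

/-- No vector of GF(2)^128 has dot product 1 with every weight-16
codeword of R(3,7). -/
theorem reedMuller_3_7_no_solution :
    ¬ ∃ x : (Fin 7 → ZMod 2) → ZMod 2,
        ∀ c ∈ ReedMuller 3 7, hammingNorm c = 16 → dotProduct x c = 1 :=
  not_exists_forall_dotProduct_eq_one_of_add_mem
    (prod_coord_mem_reedMuller {0, 1, 2} (by decide))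
    (prod_coord_mem_reedMuller {0, 1, 3} (by decide))
    (by decide) (by decide) (by decide)

end
end

section
/- The 3rd order Reed-Muller code R(3,7) has no self-dual neighbor of length 128 with minimum distance d for d ∈ {20, 24}; that is, there is no self-dual binary code C' ⊆ GF(2)^128 with dim(R(3,7) ∩ C') = 63 whose minimum distance is 20 or 24. -/
/-!
Over GF(2) the square-free monomials of degree at most 3 in 7 variables span R(3,7), so
dim R(3,7) ≤ 64 and D = R(3,7) ∩ C' (of dimension 63) has codimension at most 1 in R(3,7).
Such a D meets every 2-dimensional subspace of R(3,7) nontrivially. The indicators of the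
4-flats x₀ = x₁ = x₂ = 0 and x₀ = x₁ = x₃ = 0 lie in R(3,7) and meet in a 3-flat, so all
nonzero words of their span have weight 16. Hence C' contains a nonzero word of weight 16,
which is impossible if its minimum distance is 20 or 24.
-/

noncomputable section

open MvPolynomial Finset

lemma zmod_two_pow_of_ne_zero (x : ZMod 2) {n : ℕ} (hn : n ≠ 0) : x ^ n = x := by
  obtain ⟨k, rfl⟩ := Nat.exists_eq_succ_of_ne_zero hn
  exact IsIdempotentElem.pow_succ_eq k (by fin_cases x <;> rfl)

lemma card_support_le_totalDegree {σ R : Type*} [CommSemiring R] {p : MvPolynomial σ R}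
    {d : σ →₀ ℕ} (hd : d ∈ p.support) : #d.support ≤ p.totalDegree :=
  calc #d.support = ∑ _ ∈ d.support, 1 := card_eq_sum_ones _
    _ ≤ d.sum fun _ e => e :=
      sum_le_sum fun _ hi => Nat.one_le_iff_ne_zero.mpr (Finsupp.mem_support_iff.mp hi)
    _ ≤ p.totalDegree := le_totalDegree hd

section ReedMuller

variable {m r : ℕ}

def squarefreeMonomial (s : Finset (Fin m)) : (Fin m → ZMod 2) → ZMod 2 :=
  fun v => ∏ i ∈ s, v i

lemma evalLM_monomial (d : Fin m →₀ ℕ) (c : ZMod 2) :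
    evalLM m (monomial d c) = c • squarefreeMonomial d.support := by
  funext v
  simp only [evalLM, LinearMap.coe_mk, AddHom.coe_mk, eval_monomial, Pi.smul_apply, smul_eq_mul,
    squarefreeMonomial, Finsupp.prod]
  exact congrArg _ <| prod_congr rfl fun _ hi =>
    zmod_two_pow_of_ne_zero _ (Finsupp.mem_support_iff.mp hi)

lemma reedMuller_le_span_squarefreeMonomial :
    ReedMuller r m ≤ Submodule.span (ZMod 2)
      (((univ : Finset (Finset (Fin m))).filter (#· ≤ r)).image squarefreeMonomial : Set _) := by
  rintro f ⟨p, hp, rfl⟩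
  rw [SetLike.mem_coe, mem_restrictTotalDegree] at hp
  rw [← support_sum_monomial_coeff p, map_sum]
  refine Submodule.sum_mem _ fun d hd => ?_
  rw [evalLM_monomial]
  refine Submodule.smul_mem _ _ (Submodule.subset_span ?_)
  exact mem_image_of_mem _ <|
    mem_filter.mpr ⟨mem_univ _, (card_support_le_totalDegree hd).trans hp⟩

lemma finrank_reedMuller_le : Module.finrank (ZMod 2) (ReedMuller r m) ≤
    #((univ : Finset (Finset (Fin m))).filter (#· ≤ r)) :=
  (Submodule.finrank_mono reedMuller_le_span_squarefreeMonomial).trans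
    ((finrank_span_finset_le_card _).trans card_image_le)

/-- The indicator function of the flat `{v | ∀ i ∈ s, v i = 0}`. -/
def flatIndicator (s : Finset (Fin m)) : (Fin m → ZMod 2) → ZMod 2 :=
  fun v => ∏ i ∈ s, (v i + 1)

lemma flatIndicator_mem_reedMuller {s : Finset (Fin m)} (hs : #s ≤ r) :
    flatIndicator s ∈ ReedMuller r m := by
  refine ⟨∏ i ∈ s, (X i + 1), ?_, ?_⟩
  · rw [SetLike.mem_coe, mem_restrictTotalDegree]
    calc (∏ i ∈ s, (X i + 1) : MvPolynomial (Fin m) (ZMod 2)).totalDegree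
        ≤ ∑ i ∈ s, (X i + 1 : MvPolynomial (Fin m) (ZMod 2)).totalDegree :=
          totalDegree_finsetProd _ _
      _ ≤ ∑ i ∈ s, 1 := sum_le_sum fun _ _ =>
          (totalDegree_add _ _).trans (by simp [totalDegree_X])
      _ ≤ r := by simpa using hs
  · funext v; simp [evalLM, flatIndicator]

end ReedMuller

theorem Submodule.inf_ne_bot_of_finrank_le_succ {K V : Type*} [DivisionRing K] [AddCommGroup V]
    [Module K V] [FiniteDimensional K V] {U W P : Submodule K V} (hW : W ≤ U) (hP : P ≤ U)
    (hU : Module.finrank K U ≤ Module.finrank K W + 1) (hP2 : 2 ≤ Module.finrank K P) :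
    P ⊓ W ≠ ⊥ := by
  intro h
  have hdim := Submodule.finrank_sup_add_finrank_inf_eq P W
  have hsup := Submodule.finrank_mono (sup_le hP hW)
  rw [h, finrank_bot] at hdim
  omega

section ZModTwo

lemma zmod_two_eq_zero_or_one (s : ZMod 2) : s = 0 ∨ s = 1 := by
  revert s; decide

variable {M : Type*} [AddCommGroup M] [Module (ZMod 2) M] {a b x : M}

lemma mem_span_pair_zmod_two (hx : x ∈ Submodule.span (ZMod 2) {a, b}) :
    x = 0 ∨ x = a ∨ x = b ∨ x = a + b := by
  obtain ⟨s, t, rfl⟩ := Submodule.mem_span_pair.mp hx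
  rcases zmod_two_eq_zero_or_one s with rfl | rfl <;>
    rcases zmod_two_eq_zero_or_one t with rfl | rfl <;> simp

lemma linearIndependent_pair_zmod_two (ha : a ≠ 0) (hb : b ≠ 0) (hab : a + b ≠ 0) :
    LinearIndependent (ZMod 2) ![a, b] := by
  refine LinearIndependent.pair_iff.mpr fun s t hst => ?_
  rcases zmod_two_eq_zero_or_one s with rfl | rfl <;>
    rcases zmod_two_eq_zero_or_one t with rfl | rfl <;> simp_all

end ZModTwo

def flatPlane : Submodule (ZMod 2) ((Fin 7 → ZMod 2) → ZMod 2) :=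
  Submodule.span (ZMod 2) {flatIndicator {0, 1, 2}, flatIndicator {0, 1, 3}}

lemma flatPlane_le_reedMuller : flatPlane ≤ ReedMuller 3 7 := by
  rw [flatPlane, Submodule.span_le, Set.insert_subset_iff, Set.singleton_subset_iff]
  exact ⟨flatIndicator_mem_reedMuller (by decide), flatIndicator_mem_reedMuller (by decide)⟩

lemma hammingNorm_of_mem_flatPlane {x : (Fin 7 → ZMod 2) → ZMod 2} (hx : x ∈ flatPlane)
    (hx0 : x ≠ 0) : hammingNorm x = 16 := by
  rcases mem_span_pair_zmod_two hx with rfl | rfl | rfl | rfl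
  · exact absurd rfl hx0
  all_goals decide

lemma finrank_flatPlane : Module.finrank (ZMod 2) flatPlane = 2 := by
  rw [flatPlane, ← Matrix.range_cons_cons_empty _ _ ![],
    finrank_span_eq_card (linearIndependent_pair_zmod_two (by decide) (by decide) (by decide)),
    Fintype.card_fin]

/-- R(3,7) has no self-dual neighbor of minimum distance 20 or 24. -/
theorem reedMuller_3_7_no_selfdual_neighbor :
    ¬ ∃ C' : Submodule (ZMod 2) ((Fin 7 → ZMod 2) → ZMod 2),
        dualCode C' = C' ∧
        Module.finrank (ZMod 2) ↥(ReedMuller 3 7 ⊓ C') = 63 ∧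
        (IsMinDist C' 20 ∨ IsMinDist C' 24) := by
  rintro ⟨C', -, hdim, hd⟩
  have hcodim : Module.finrank (ZMod 2) (ReedMuller 3 7) ≤ 63 + 1 :=
    finrank_reedMuller_le.trans_eq (by decide)
  obtain ⟨x, ⟨hxP, -, hxC⟩, hx0⟩ := Submodule.ne_bot_iff _ |>.mp <|
    Submodule.inf_ne_bot_of_finrank_le_succ inf_le_left flatPlane_le_reedMuller
      (hdim ▸ hcodim) finrank_flatPlane.ge
  have h16 := hammingNorm_of_mem_flatPlane hxP hx0
  rcases hd with h | h <;> linarith [h.2 x hxC hx0]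

end
end

section
/- Let C be a doubly-even self-dual binary code of length 32 with minimum distance 8 (an extremal doubly-even self-dual [32,16,8] code). Then the weight distribution of C is uniquely determined: A_0 = 1, A_8 = 620, A_12 = 13888, A_16 = 36518, A_20 = 13888, A_24 = 620, A_32 = 1, and A_i = 0 for all other i. -/
noncomputable section

/-!
Since `C = C⊥` has minimum distance 8, no nonzero dual codeword is supported on at most 7
coordinates, so restricting `C` to any set `S` of `k ≤ 7` coordinates is onto `GF(2)^S`: exactly
`|C| / 2^k` codewords are `1` on all of `S`. Counting pairs `(c, S)` with `c` equal to `1` on `S`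
gives the power moments `2^k ∑ᵢ Aᵢ (i choose k) = (32 choose k) |C|` for `k ≤ 7`. As `Aᵢ` vanishes
outside `{0, 8, 12, …, 32}` and `A₀ = 1`, these are eight linear equations in the eight unknowns
`A₈, …, A₃₂, |C|`, and they have a unique solution.
-/

open Finset

theorem AddMonoidHom.card_fiber_mul_card_of_surjective {G M : Type*} [AddGroup G] [Fintype G]
    [AddMonoid M] [Fintype M] [DecidableEq M] (f : G →+ M) (hf : Function.Surjective f) (m : M) :
    #{g | f g = m} * Fintype.card M = Fintype.card G := by
  calc #{g | f g = m} * Fintype.card M = ∑ m' : M, #{g | f g = m'} := by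
        rw [sum_congr rfl fun m' _ => AddMonoidHom.card_fiber_eq_of_mem_range f (hf m') (hf m),
          sum_const, card_univ, smul_eq_mul, mul_comm]
    _ = Fintype.card G :=
        (card_eq_sum_card_fiberwise (s := univ) (t := univ) fun _ _ => mem_coe.2 (mem_univ _)).symm

theorem choose_hammingNorm_eq_card {ι : Type*} [Fintype ι] {β : ι → Type*}
    [∀ i, Zero (β i)] [∀ i, DecidableEq (β i)] (x : ∀ i, β i) (k : ℕ) :
    (hammingNorm x).choose k = #{S ∈ powersetCard k univ | ∀ i ∈ S, x i ≠ 0} := by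
  rw [hammingNorm, ← card_powersetCard]
  congr 1
  ext S
  simp [mem_powersetCard, subset_iff, and_comm]

section Codes

variable {ι : Type*} [Fintype ι]

theorem wtDist_zero (C : Submodule (ZMod 2) (ι → ZMod 2)) : wtDist C 0 = 1 := by
  have : {c : ι → ZMod 2 | c ∈ C ∧ hammingNorm c = 0} = {0} := by
    ext c
    simp +contextual [hammingNorm_eq_zero]
  rw [wtDist, this, Set.ncard_singleton]

theorem wtDist_eq_zero (C : Submodule (ZMod 2) (ι → ZMod 2)) {i : ℕ}
    (h : ∀ c ∈ C, hammingNorm c ≠ i) : wtDist C i = 0 := by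
  rw [wtDist, Set.ncard_eq_zero]
  exact Set.eq_empty_of_forall_notMem fun c hc => h c hc.1 hc.2

theorem wtDist_eq_card (C : Submodule (ZMod 2) (ι → ZMod 2)) [Fintype C] (i : ℕ) :
    wtDist C i = #{c : C | hammingNorm (c : ι → ZMod 2) = i} := by
  rw [wtDist, ← Set.ncard_coe_finset, ← Set.ncard_image_of_injective _ Subtype.val_injective]
  congr 1
  ext c
  simp [and_comm]

theorem sum_hammingNorm_eq_sum_wtDist (C : Submodule (ZMod 2) (ι → ZMod 2)) [Fintype C]
    {M : Type*} [AddCommMonoid M] (g : ℕ → M) :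
    ∑ c : C, g (hammingNorm (c : ι → ZMod 2))
      = ∑ i ∈ range (Fintype.card ι + 1), wtDist C i • g i := by
  rw [← sum_fiberwise_of_maps_to (t := range (Fintype.card ι + 1))
    (g := fun c : C => hammingNorm (c : ι → ZMod 2))
    fun c _ => mem_range_succ_iff.2 hammingNorm_le_card_fintype]
  refine sum_congr rfl fun i _ => ?_
  rw [sum_congr rfl fun c hc => congrArg g (mem_filter.1 hc).2, sum_const, wtDist_eq_card]

theorem restrict_surjective_of_lt_dual_weight (C : Submodule (ZMod 2) (ι → ZMod 2))
    (S : Finset ι) (hS : ∀ y ∈ dualCode C, y ≠ 0 → #S < hammingNorm y) :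
    Function.Surjective ((LinearMap.funLeft (ZMod 2) (ZMod 2) ((↑) : S → ι)).comp C.subtype) := by
  classical
  rw [← LinearMap.range_eq_top]
  by_contra hne
  obtain ⟨φ, hφ, hφker⟩ := (LinearMap.range _).exists_le_ker_of_lt_top (lt_top_iff_ne_top.2 hne)
  set ψ := φ.comp (LinearMap.funLeft (ZMod 2) (ZMod 2) ((↑) : S → ι))
  set y : ι → ZMod 2 := fun i => ψ fun j => if i = j then 1 else 0
  have hψ : ∀ x, ψ x = y ⬝ᵥ x := fun x => by
    simp only [ψ.pi_apply_eq_sum_univ x, dotProduct, smul_eq_mul, mul_comm, y]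
  have hyC : y ∈ dualCode C := fun c hc => (hψ c).symm.trans (hφker ⟨⟨c, hc⟩, rfl⟩)
  have hyS : hammingNorm y ≤ #S := card_le_card fun i hi => by
    by_contra hiS
    refine (mem_filter.1 hi).2 ?_
    simp only [y, ψ, LinearMap.comp_apply]
    convert φ.map_zero
    funext j
    simp [LinearMap.funLeft, show i ≠ j from fun h => hiS (h ▸ j.2)]
  have hy : y = 0 := by
    by_contra hy
    exact (hS y hyC hy).not_ge hyS
  apply hφ
  refine LinearMap.ext fun v => ?_
  obtain ⟨x, rfl⟩ := LinearMap.funLeft_surjective_of_injective (ZMod 2) (ZMod 2) _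
    Subtype.val_injective v
  change ψ x = 0
  rw [hψ, hy, zero_dotProduct]

theorem card_forall_ne_zero_mul_two_pow (C : Submodule (ZMod 2) (ι → ZMod 2)) [Fintype C]
    (S : Finset ι) (hS : ∀ y ∈ dualCode C, y ≠ 0 → #S < hammingNorm y) :
    #{c : C | ∀ i ∈ S, (c : ι → ZMod 2) i ≠ 0} * 2 ^ #S = Fintype.card C := by
  classical
  set f := (LinearMap.funLeft (ZMod 2) (ZMod 2) ((↑) : S → ι)).comp C.subtype
  have hfiber : ∀ c : C, (∀ i ∈ S, (c : ι → ZMod 2) i ≠ 0) ↔ f c = 1 := fun c => by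
    have h2 : ∀ a : ZMod 2, a ≠ 0 ↔ a = 1 := by decide
    simp [funext_iff, f, LinearMap.funLeft, h2]
  convert f.toAddMonoidHom.card_fiber_mul_card_of_surjective
    (restrict_surjective_of_lt_dual_weight C S hS) 1 using 3
  · ext c
    simp only [mem_filter, mem_univ, true_and]
    exact hfiber c
  · simp

theorem two_pow_mul_sum_choose_hammingNorm (C : Submodule (ZMod 2) (ι → ZMod 2)) [Fintype C]
    (k : ℕ) (hk : ∀ y ∈ dualCode C, y ≠ 0 → k < hammingNorm y) :
    2 ^ k * ∑ c : C, (hammingNorm (c : ι → ZMod 2)).choose k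
      = (Fintype.card ι).choose k * Fintype.card C := by
  calc _ = 2 ^ k * ∑ c : C, #{S ∈ powersetCard k univ | ∀ i ∈ S, (c : ι → ZMod 2) i ≠ 0} := by
        simp_rw [choose_hammingNorm_eq_card]
    _ = (∑ S ∈ powersetCard k univ, #{c : C | ∀ i ∈ S, (c : ι → ZMod 2) i ≠ 0}) * 2 ^ k := by
        rw [mul_comm]
        congr 1
        exact sum_card_bipartiteAbove_eq_sum_card_bipartiteBelow _
    _ = ∑ S ∈ powersetCard k univ, Fintype.card C := by
        rw [sum_mul]
        refine sum_congr rfl fun S hS => ?_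
        obtain ⟨-, rfl⟩ := mem_powersetCard.1 hS
        exact card_forall_ne_zero_mul_two_pow C S hk
    _ = _ := by rw [sum_const, card_powersetCard, card_univ, smul_eq_mul]

theorem two_pow_mul_sum_wtDist_mul_choose (C : Submodule (ZMod 2) (ι → ZMod 2)) (k : ℕ)
    (hk : ∀ y ∈ dualCode C, y ≠ 0 → k < hammingNorm y) :
    2 ^ k * ∑ i ∈ range (Fintype.card ι + 1), wtDist C i * i.choose k
      = (Fintype.card ι).choose k * Nat.card C := by
  classical
  have hgroup := sum_hammingNorm_eq_sum_wtDist C (·.choose k)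
  simp only [smul_eq_mul] at hgroup
  rw [← hgroup, two_pow_mul_sum_choose_hammingNorm C k hk, Nat.card_eq_fintype_card]

end Codes

theorem wtDist_eq_zero_of_doublyEven_of_minDist_eight (C : Submodule (ZMod 2) (Fin 32 → ZMod 2))
    (hde : ∀ c ∈ C, hammingNorm c % 4 = 0) (hmin : ∀ c ∈ C, c ≠ 0 → 8 ≤ hammingNorm c) {i : ℕ}
    (hi : i ∉ ({0, 8, 12, 16, 20, 24, 28, 32} : Finset ℕ)) : wtDist C i = 0 := by
  refine wtDist_eq_zero C fun c hc hci => hi ?_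
  have hle : hammingNorm c ≤ 32 := by simpa using hammingNorm_le_card_fintype (x := c)
  have hpos : hammingNorm c = 0 ∨ 8 ≤ hammingNorm c := by
    rcases eq_or_ne c 0 with rfl | hc0
    · exact .inl hammingNorm_zero
    · exact .inr (hmin c hc hc0)
  have := hde c hc
  simp only [mem_insert, mem_singleton]
  omega

theorem weights_eq_of_moments_extremal32 (A : ℕ → ℕ) (M : ℕ) (h0 : A 0 = 1)
    (hmom : ∀ k ≤ 7, 2 ^ k * ∑ i ∈ ({0, 8, 12, 16, 20, 24, 28, 32} : Finset ℕ), A i * i.choose k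
      = (32).choose k * M) :
    A 8 = 620 ∧ A 12 = 13888 ∧ A 16 = 36518 ∧ A 20 = 13888 ∧ A 24 = 620 ∧ A 28 = 0 ∧
      A 32 = 1 := by
  have E : ∀ k ≤ 7, (2 : ℚ) ^ k * ∑ i ∈ ({0, 8, 12, 16, 20, 24, 28, 32} : Finset ℕ),
      (A i : ℚ) * i.choose k = (32).choose k * M := fun k hk => by exact_mod_cast hmom k hk
  have E0 := E 0 (by norm_num)
  have E1 := E 1 (by norm_num)
  have E2 := E 2 (by norm_num)
  have E3 := E 3 (by norm_num)
  have E4 := E 4 (by norm_num)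
  have E5 := E 5 (by norm_num)
  have E6 := E 6 (by norm_num)
  have E7 := E 7 (by norm_num)
  simp [sum_insert, Nat.choose_eq_descFactorial_div_factorial, Nat.descFactorial, Nat.factorial,
    h0] at E0 E1 E2 E3 E4 E5 E6 E7
  ring_nf at E0 E1 E2 E3 E4 E5 E6 E7
  refine ⟨?_, ?_, ?_, ?_, ?_, ?_, ?_⟩ <;>
    (apply Nat.cast_injective (R := ℚ); push_cast; linarith)

/-- An extremal doubly-even self-dual [32,16,8] code has a uniquely
determined weight distribution. -/
theorem extremal_32_weight_distribution
    (C : Submodule (ZMod 2) (Fin 32 → ZMod 2))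
    (hself : dualCode C = C)
    (hde : ∀ c ∈ C, hammingNorm c % 4 = 0)
    (hmin : IsMinDist C 8) :
    wtDist C 0 = 1 ∧ wtDist C 8 = 620 ∧ wtDist C 12 = 13888 ∧ wtDist C 16 = 36518 ∧
    wtDist C 20 = 13888 ∧ wtDist C 24 = 620 ∧ wtDist C 32 = 1 ∧
    ∀ i : ℕ, i ∉ ({0, 8, 12, 16, 20, 24, 32} : Finset ℕ) → wtDist C i = 0 := by
  have hsupp : ∀ i ∉ ({0, 8, 12, 16, 20, 24, 28, 32} : Finset ℕ), wtDist C i = 0 :=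
    fun _ => wtDist_eq_zero_of_doublyEven_of_minDist_eight C hde hmin.2
  have hmom : ∀ k ≤ 7, 2 ^ k * ∑ i ∈ ({0, 8, 12, 16, 20, 24, 28, 32} : Finset ℕ),
      wtDist C i * i.choose k = (32).choose k * Nat.card C := fun k hk => by
    rw [sum_subset (by decide : _ ⊆ range 33) fun i _ hi => by rw [hsupp i hi, zero_mul]]
    simpa using two_pow_mul_sum_wtDist_mul_choose C k fun y hy hy0 =>
      (hmin.2 y (hself ▸ hy) hy0).trans_lt' (by omega)
  obtain ⟨h8, h12, h16, h20, h24, h28, h32⟩ :=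
    weights_eq_of_moments_extremal32 (wtDist C) _ (wtDist_zero C) hmom
  refine ⟨wtDist_zero C, h8, h12, h16, h20, h24, h32, fun i hi => ?_⟩
  rcases eq_or_ne i 28 with rfl | hi28
  · exact h28
  · exact hsupp i (by simp_all)

end
end
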